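/- Let b_1, ..., b_m (m ≥ 2) be unit vectors in ℝ³ with at least two of them noncollinear, and k_R, k_1, ..., k_m > 0. Set M := Σ_j k_j b_j b_jᵀ, Q := Σ_j k_j ([b_j]^×)ᵀ [b_j]^×, and let λ_Q > 0 be the smallest eigenvalue of Q. Let R̃_j : [0, ∞) → SO(3) be continuous inputs and let R̃ : [0, ∞) → SO(3) be a differentiable solution of R̃'(t) = −2 k_R R̃(t)[ψ(M R̃(t))]^× + k_R R̃(t)[Σ_j k_j g_j(t)]^× with g_j(t) := (R̃_j(t)ᵀ − I₃) b_j × R̃(t)ᵀ b_j. Then for all t ≥ 0, the derivative of t ↦ |R̃(t)|_I² satisfies (d/dt)|R̃(t)|_I² ≤ −4 k_R λ_Q |R̃(t)|_I² + 4 k_R λ_Q + √2 k_R Σ_j k_j |R̃_j(t)|_I. -/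
import Mathlib


open Matrix Real Filter

noncomputable section

/-- 3×3 real matrices. -/
abbrev M3 := Matrix (Fin 3) (Fin 3) ℝ
/-- Vectors in ℝ³. -/
abbrev V3 := Fin 3 → ℝ

/-- The special orthogonal group SO(3). -/
def SO3 (R : M3) : Prop := Rᵀ * R = 1 ∧ R.det = 1

/-- The skew-symmetric matrix [x]^× with [x]^× y = x × y. -/
def skew (x : V3) : M3 := !![0, -x 2, x 1; x 2, 0, -x 0; -x 1, x 0, 0]

/-- ψ(C) = vex(𝒫ₐ(C)) = (1/2)[c₃₂ − c₂₃, c₁₃ − c₃₁, c₂₁ − c₁₂]ᵀ. -/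
def psi (C : M3) : V3 := ![(C 2 1 - C 1 2)/2, (C 0 2 - C 2 0)/2, (C 1 0 - C 0 1)/2]

/-- Euclidean norm on ℝ³. -/
def norm3 (x : V3) : ℝ := Real.sqrt (x ⬝ᵥ x)

/-- Frobenius norm on 3×3 matrices. -/
def frob (A : M3) : ℝ := Real.sqrt ((Aᵀ * A).trace)

/-- Normalized Euclidean distance |R|_I = √((1/4) tr(I₃ − R)) on SO(3). -/
def nI (R : M3) : ℝ := Real.sqrt ((1 - R).trace / 4)

/-- Orthogonal projection matrix P_x = I₃ − x xᵀ/‖x‖². -/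
def proj (x : V3) : M3 := 1 - (x ⬝ᵥ x)⁻¹ • vecMulVec x x

/-- Entrywise derivative of a matrix-valued function. -/
def HasMatDerivAt (X : ℝ → M3) (X' : M3) (t : ℝ) : Prop :=
  ∀ i j, HasDerivAt (fun s => X s i j) (X' i j) t

/-- Entrywise derivative of a vector-valued function. -/
def HasVecDerivAt (x : ℝ → V3) (x' : V3) (t : ℝ) : Prop :=
  ∀ i, HasDerivAt (fun s => x s i) (x' i) t

/- ===== auxiliary lemmas ===== -/

lemma dot_self_nonneg3 (u : V3) : 0 ≤ u ⬝ᵥ u := by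
  simp only [dotProduct, Fin.sum_univ_three]
  nlinarith [sq_nonneg (u 0), sq_nonneg (u 1), sq_nonneg (u 2)]

lemma cs3 (u v : V3) : (u ⬝ᵥ v)^2 ≤ (u ⬝ᵥ u) * (v ⬝ᵥ v) := by
  simp only [dotProduct, Fin.sum_univ_three]
  nlinarith [sq_nonneg (u 0*v 1 - u 1*v 0), sq_nonneg (u 0*v 2 - u 2*v 0),
    sq_nonneg (u 1*v 2 - u 2*v 1)]

lemma cross_self_dot (u v : V3) :
    (crossProduct u v) ⬝ᵥ (crossProduct u v) = (u ⬝ᵥ u)*(v ⬝ᵥ v) - (u ⬝ᵥ v)^2 := by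
  simp [crossProduct, dotProduct, Fin.sum_univ_three]
  ring

lemma trace_mul_skew (A : M3) (x : V3) : (A * skew x).trace = -(2 * (psi A ⬝ᵥ x)) := by
  simp [Matrix.trace_fin_three, Matrix.mul_apply, skew, psi, dotProduct, Fin.sum_univ_three]
  ring

lemma mulvec_sq_le (B : M3) (x : V3) :
    (B *ᵥ x) ⬝ᵥ (B *ᵥ x) ≤ (∑ i, ∑ j, (B i j)^2) * (x ⬝ᵥ x) := by
  simp only [Matrix.mulVec, dotProduct, Fin.sum_univ_three]
  nlinarith [sq_nonneg (B 0 0*x 1 - B 0 1*x 0), sq_nonneg (B 0 0*x 2 - B 0 2*x 0),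
    sq_nonneg (B 0 1*x 2 - B 0 2*x 1), sq_nonneg (B 1 0*x 1 - B 1 1*x 0),
    sq_nonneg (B 1 0*x 2 - B 1 2*x 0), sq_nonneg (B 1 1*x 2 - B 1 2*x 1),
    sq_nonneg (B 2 0*x 1 - B 2 1*x 0), sq_nonneg (B 2 0*x 2 - B 2 2*x 0),
    sq_nonneg (B 2 1*x 2 - B 2 2*x 1)]

theorem so3_key1 (R : M3) (h : Rᵀ * R = 1) (h2 : R * Rᵀ = 1) (hdet : R.det = 1) :
    4*(psi R ⬝ᵥ psi R) + (R.trace - 1)^2 = 4 := by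
  have ho : ∀ p q : Fin 3, R 0 p * R 0 q + R 1 p * R 1 q + R 2 p * R 2 q = if p = q then 1 else 0 := by
    intro p q; have := congrFun (congrFun h p) q
    simpa [Matrix.mul_apply, Fin.sum_univ_three, Matrix.one_apply] using this
  have ho2 : ∀ p q : Fin 3, R p 0 * R q 0 + R p 1 * R q 1 + R p 2 * R q 2 = if p = q then 1 else 0 := by
    intro p q; have := congrFun (congrFun h2 p) q
    simpa [Matrix.mul_apply, Fin.sum_univ_three, Matrix.one_apply] using this
  have o00 := ho 0 0; have o11 := ho 1 1; have o22 := ho 2 2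
  have o200 := ho2 0 0; have o211 := ho2 1 1; have o222 := ho2 2 2
  have o201 := ho2 0 1; have o202 := ho2 0 2; have o212 := ho2 1 2
  simp only [if_pos rfl, if_true, if_neg (by decide : ¬((0:Fin 3) = 1)), if_neg (by decide : ¬((0:Fin 3) = 2)), if_neg (by decide : ¬((1:Fin 3) = 2))] at *
  have hd : R 0 0 * (R 1 1 * R 2 2 - R 1 2 * R 2 1) - R 0 1 * (R 1 0 * R 2 2 - R 1 2 * R 2 0) + R 0 2 * (R 1 0 * R 2 1 - R 1 1 * R 2 0) = 1 := by
    rw [Matrix.det_fin_three] at hdet; linarith [hdet]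
  simp only [psi, dotProduct, Fin.sum_univ_three, Matrix.trace_fin_three, Matrix.cons_val_zero, Matrix.cons_val_one, Matrix.head_cons, Matrix.cons_val_two, Matrix.tail_cons]
  linear_combination (1/2) * (o200 + o211 + o222) + (1/2) * (o00 + o11 + o22) + (2*(R 0 0 + R 1 1 + R 2 2)) * hd + (-2) * ((R 1 1 * R 2 2 - R 1 2 * R 2 1)) * o200 + (-2) * ((R 0 0 * R 2 2 - R 0 2 * R 2 0)) * o211 + (-2) * ((R 0 0 * R 1 1 - R 0 1 * R 1 0)) * o222 + (-2) * (-(R 1 0 * R 2 2 - R 1 2 * R 2 0) + -(R 0 1 * R 2 2 - R 0 2 * R 2 1)) * o201 + (-2) * ((R 1 0 * R 2 1 - R 1 1 * R 2 0) + (R 0 1 * R 1 2 - R 0 2 * R 1 1)) * o202 + (-2) * (-(R 0 0 * R 2 1 - R 0 1 * R 2 0) + -(R 0 0 * R 1 2 - R 0 2 * R 1 0)) * o212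

theorem so3_key2 (R : M3) (h : Rᵀ * R = 1) (h2 : R * Rᵀ = 1) (b : V3) :
    psi R ⬝ᵥ psi (vecMulVec b b * R) = ((psi R ⬝ᵥ psi R)*(b ⬝ᵥ b) - (b ⬝ᵥ psi R)^2)/2 := by
  have ho : ∀ p q : Fin 3, R 0 p * R 0 q + R 1 p * R 1 q + R 2 p * R 2 q = if p = q then 1 else 0 := by
    intro p q; have := congrFun (congrFun h p) q
    simpa [Matrix.mul_apply, Fin.sum_univ_three, Matrix.one_apply] using this
  have ho2 : ∀ p q : Fin 3, R p 0 * R q 0 + R p 1 * R q 1 + R p 2 * R q 2 = if p = q then 1 else 0 := by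
    intro p q; have := congrFun (congrFun h2 p) q
    simpa [Matrix.mul_apply, Fin.sum_univ_three, Matrix.one_apply] using this
  have o00 := ho 0 0; have o11 := ho 1 1; have o22 := ho 2 2
  have o01 := ho 0 1; have o02 := ho 0 2; have o12 := ho 1 2
  have o200 := ho2 0 0; have o211 := ho2 1 1; have o222 := ho2 2 2
  have o201 := ho2 0 1; have o202 := ho2 0 2; have o212 := ho2 1 2
  simp only [if_pos rfl, if_true, if_neg (by decide : ¬((0:Fin 3) = 1)), if_neg (by decide : ¬((0:Fin 3) = 2)), if_neg (by decide : ¬((1:Fin 3) = 2))] at *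
  simp only [psi, dotProduct, Fin.sum_univ_three, Matrix.mul_apply, Matrix.vecMulVec_apply, Matrix.cons_val_zero, Matrix.cons_val_one, Matrix.head_cons, Matrix.cons_val_two, Matrix.tail_cons]
  linear_combination (-1/8) * (b 0 * b 0) * (o00 - o200) + (-1/8) * (b 1 * b 1) * (o11 - o211) + (-1/8) * (b 2 * b 2) * (o22 - o222) + (-1/4) * (b 0 * b 1) * (o01 - o201) + (-1/4) * (b 0 * b 2) * (o02 - o202) + (-1/4) * (b 1 * b 2) * (o12 - o212)

lemma so3_tr_le (A : M3) (h : Aᵀ * A = 1) : A.trace ≤ 3 := by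
  have ho : ∀ p : Fin 3, A 0 p * A 0 p + A 1 p * A 1 p + A 2 p * A 2 p = 1 := by
    intro p; have := congrFun (congrFun h p) p
    simpa [Matrix.mul_apply, Fin.sum_univ_three, Matrix.one_apply] using this
  have o0 := ho 0; have o1 := ho 1; have o2 := ho 2
  rw [Matrix.trace_fin_three]
  nlinarith [sq_nonneg (A 0 0 - 1), sq_nonneg (A 1 1 - 1), sq_nonneg (A 2 2 - 1),
    sq_nonneg (A 1 0), sq_nonneg (A 2 0), sq_nonneg (A 0 1), sq_nonneg (A 2 1),
    sq_nonneg (A 0 2), sq_nonneg (A 1 2)]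

lemma so3_tr_ge (R : M3) (h : Rᵀ * R = 1) (h2 : R * Rᵀ = 1) (hdet : R.det = 1) :
    -1 ≤ R.trace := by
  have hk := so3_key1 R h h2 hdet
  nlinarith [dot_self_nonneg3 (psi R)]

lemma trace_one_sub (A : M3) : (1 - A).trace = 3 - A.trace := by
  rw [Matrix.trace_sub, Matrix.trace_one]
  norm_num

lemma mulVecT_dot (R : M3) (h2 : R * Rᵀ = 1) (b : V3) :
    (Rᵀ *ᵥ b) ⬝ᵥ (Rᵀ *ᵥ b) = b ⬝ᵥ b := by
  have ho2 : ∀ p q : Fin 3, R p 0 * R q 0 + R p 1 * R q 1 + R p 2 * R q 2 = if p = q then 1 else 0 := by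
    intro p q; have := congrFun (congrFun h2 p) q
    simpa [Matrix.mul_apply, Fin.sum_univ_three, Matrix.one_apply] using this
  have o200 := ho2 0 0; have o211 := ho2 1 1; have o222 := ho2 2 2
  have o201 := ho2 0 1; have o202 := ho2 0 2; have o212 := ho2 1 2
  simp only [if_pos rfl, if_true, if_neg (by decide : ¬((0:Fin 3) = 1)), if_neg (by decide : ¬((0:Fin 3) = 2)), if_neg (by decide : ¬((1:Fin 3) = 2))] at *
  simp only [Matrix.mulVec, dotProduct, Matrix.transpose_apply, Fin.sum_univ_three]
  linear_combination (b 0 * b 0) * o200 + (b 1 * b 1) * o211 + (b 2 * b 2) * o222 + (2 * b 0 * b 1) * o201 + (2 * b 0 * b 2) * o202 + (2 * b 1 * b 2) * o212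

/-- psi as a linear map. -/
noncomputable def psiL : M3 →ₗ[ℝ] V3 where
  toFun := psi
  map_add' A B := by
    funext i; fin_cases i <;> simp [psi, Matrix.add_apply] <;> ring
  map_smul' c A := by
    funext i; fin_cases i <;> simp [psi, Matrix.smul_apply, smul_eq_mul] <;> ring

lemma dotProduct_finsum {ι : Type*} (s : Finset ι) (v : V3) (f : ι → V3) :
    v ⬝ᵥ (∑ j ∈ s, f j) = ∑ j ∈ s, v ⬝ᵥ f j := by
  simp only [dotProduct, Finset.sum_apply, Finset.mul_sum]
  rw [Finset.sum_comm]

lemma per_g_bound (R A : M3) (hR : Rᵀ * R = 1) (hR2 : R * Rᵀ = 1) (hRdet : R.det = 1)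
    (hA : Aᵀ * A = 1) (b : V3) (hb : b ⬝ᵥ b = 1) :
    psi R ⬝ᵥ (crossProduct ((Aᵀ - 1) *ᵥ b) (Rᵀ *ᵥ b)) ≤
      2 * Real.sqrt 2 * Real.sqrt ((1 - A).trace / 4) := by
  set w := psi R with hw
  set u := (Aᵀ - 1) *ᵥ b with hu
  set v := Rᵀ *ᵥ b with hv
  have htrA : A.trace ≤ 3 := so3_tr_le A hA
  have ht4 : 0 ≤ (1 - A).trace / 4 := by rw [trace_one_sub]; linarith
  set c := Real.sqrt ((1 - A).trace / 4) with hc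
  have hc0 : 0 ≤ c := Real.sqrt_nonneg _
  have hc2 : c^2 = (1 - A).trace / 4 := Real.sq_sqrt ht4
  -- bound on u
  have hsq : (∑ i, ∑ j, ((Aᵀ - 1) i j)^2) = 2*(3 - A.trace) := by
    have ho : ∀ p : Fin 3, A 0 p * A 0 p + A 1 p * A 1 p + A 2 p * A 2 p = 1 := by
      intro p; have := congrFun (congrFun hA p) p
      simpa [Matrix.mul_apply, Fin.sum_univ_three, Matrix.one_apply] using this
    have o0 := ho 0; have o1 := ho 1; have o2 := ho 2
    simp only [Fin.sum_univ_three, Matrix.sub_apply, Matrix.transpose_apply,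
      Matrix.one_apply, Matrix.trace_fin_three, if_pos rfl, if_true,
      if_neg (by decide : ¬((0:Fin 3) = 1)), if_neg (by decide : ¬((0:Fin 3) = 2)),
      if_neg (by decide : ¬((1:Fin 3) = 0)), if_neg (by decide : ¬((1:Fin 3) = 2)),
      if_neg (by decide : ¬((2:Fin 3) = 0)), if_neg (by decide : ¬((2:Fin 3) = 1))]
    linear_combination o0 + o1 + o2
  have huu : u ⬝ᵥ u ≤ 8 * c^2 := by
    have h1 := mulvec_sq_le (Aᵀ - 1) b
    rw [hsq, hb, mul_one] at h1
    rw [hc2, trace_one_sub]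
    linarith
  have hvv : v ⬝ᵥ v = 1 := by rw [hv, mulVecT_dot R hR2 b, hb]
  have hgg : (crossProduct u v) ⬝ᵥ (crossProduct u v) ≤ 8 * c^2 := by
    rw [cross_self_dot, hvv, mul_one]
    have := sq_nonneg (u ⬝ᵥ v)
    linarith
  have hww : w ⬝ᵥ w ≤ 1 := by
    have hk := so3_key1 R hR hR2 hRdet
    nlinarith [sq_nonneg (R.trace - 1)]
  have hkey : (w ⬝ᵥ (crossProduct u v))^2 ≤ 8 * c^2 := by
    have h1 := cs3 w (crossProduct u v)
    nlinarith [dot_self_nonneg3 (crossProduct u v), dot_self_nonneg3 w]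
  calc w ⬝ᵥ (crossProduct u v) ≤ |w ⬝ᵥ (crossProduct u v)| := le_abs_self _
    _ = Real.sqrt ((w ⬝ᵥ (crossProduct u v))^2) := (Real.sqrt_sq_eq_abs _).symm
    _ ≤ Real.sqrt (8 * c^2) := Real.sqrt_le_sqrt hkey
    _ = 2 * Real.sqrt 2 * c := by
        rw [show (8:ℝ) * c^2 = (2 * Real.sqrt 2 * c)^2 by
          have : Real.sqrt 2 ^ 2 = 2 := Real.sq_sqrt (by norm_num)
          nlinarith [this]]
        exact Real.sqrt_sq (by positivity)


/-- ISS-type differential inequality for the forced attitude error dynamics: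
    (d/dt)|R̃(t)|_I² ≤ −4 k_R λ_Q |R̃(t)|_I² + 4 k_R λ_Q + √2 k_R Σ_j k_j |R̃_j(t)|_I.
    Here λ_Q, the smallest eigenvalue of the symmetric matrix Q, is characterized as the
    greatest constant c with c‖x‖² ≤ xᵀQx for all x. -/
theorem forced_attitude_ISS_inequality (m : ℕ) (hm : 2 ≤ m) (b : Fin m → V3)
    (kR : ℝ) (k : Fin m → ℝ)
    (hb : ∀ j, b j ⬝ᵥ b j = 1) (hkR : 0 < kR) (hk : ∀ j, 0 < k j)
    (hnc : ∃ j l, j ≠ l ∧ LinearIndependent ℝ ![b j, b l])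
    (M Q : M3) (hM : M = ∑ j, k j • vecMulVec (b j) (b j))
    (hQ : Q = ∑ j, k j • ((skew (b j))ᵀ * skew (b j)))
    (lamQ : ℝ) (hlamQ : 0 < lamQ)
    (hlam : IsGreatest {c : ℝ | ∀ x : V3, c * (x ⬝ᵥ x) ≤ x ⬝ᵥ (Q *ᵥ x)} lamQ)
    (Rj : Fin m → ℝ → M3) (hRjcont : ∀ j i i', Continuous (fun t => Rj j t i i'))
    (hRjSO3 : ∀ j t, 0 ≤ t → SO3 (Rj j t))
    (Rtil : ℝ → M3) (hSO3 : ∀ t, 0 ≤ t → SO3 (Rtil t))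
    (g : Fin m → ℝ → V3)
    (hg : ∀ j t, g j t = crossProduct (((Rj j t)ᵀ - 1) *ᵥ b j) ((Rtil t)ᵀ *ᵥ b j))
    (hdyn : ∀ t, 0 ≤ t → HasMatDerivAt Rtil
      ((-(2 * kR)) • (Rtil t * skew (psi (M * Rtil t))) +
        kR • (Rtil t * skew (∑ j, k j • g j t))) t) :
    ∀ t, 0 ≤ t →
      deriv (fun s => (1 - Rtil s).trace / 4) t ≤
        -(4 * kR * lamQ) * ((1 - Rtil t).trace / 4) + 4 * kR * lamQ +
          Real.sqrt 2 * kR * ∑ j, k j * nI (Rj j t) := by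
  intro t ht
  obtain ⟨hRo, hRdet⟩ := hSO3 t ht
  have hRo2 : Rtil t * (Rtil t)ᵀ = 1 := mul_eq_one_comm.mp hRo
  set X' : M3 := (-(2 * kR)) • (Rtil t * skew (psi (M * Rtil t))) +
      kR • (Rtil t * skew (∑ j, k j • g j t)) with hX'
  have hD := hdyn t ht
  -- derivative of the Lyapunov-type function
  have h1 : ∀ s, (1 - Rtil s).trace / 4 = (3 - (Rtil s 0 0 + Rtil s 1 1 + Rtil s 2 2))/4 := by
    intro s; rw [trace_one_sub, Matrix.trace_fin_three]
  have hsum : HasDerivAt (fun s => Rtil s 0 0 + Rtil s 1 1 + Rtil s 2 2)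
      (X' 0 0 + X' 1 1 + X' 2 2) t := ((hD 0 0).add (hD 1 1)).add (hD 2 2)
  have hder : HasDerivAt (fun s => (1 - Rtil s).trace / 4)
      (-(X' 0 0 + X' 1 1 + X' 2 2)/4) t := by
    have h2 := (hsum.const_sub 3).div_const 4
    have funeq : (fun s => (1 - Rtil s).trace / 4)
        = (fun s => (3 - (Rtil s 0 0 + Rtil s 1 1 + Rtil s 2 2))/4) := funext h1
    rw [funeq]
    exact h2
  rw [hder.deriv]
  -- trace of X'
  have htrX : X' 0 0 + X' 1 1 + X' 2 2 = X'.trace := (Matrix.trace_fin_three X').symm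
  have htr : X'.trace = 4*kR*(psi (Rtil t) ⬝ᵥ psi (M * Rtil t))
      - 2*kR*(psi (Rtil t) ⬝ᵥ (∑ j, k j • g j t)) := by
    rw [hX', Matrix.trace_add, Matrix.trace_smul, Matrix.trace_smul,
      trace_mul_skew, trace_mul_skew]
    simp only [smul_eq_mul]
    ring
  -- nonnegativity of the damping term
  have hMR : M * Rtil t = ∑ j, k j • (vecMulVec (b j) (b j) * Rtil t) := by
    rw [hM, Finset.sum_mul]
    exact Finset.sum_congr rfl fun j _ => smul_mul_assoc _ _ _
  have hpsiM : psi (M * Rtil t) = ∑ j, k j • psi (vecMulVec (b j) (b j) * Rtil t) := by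
    have hco : ⇑psiL = psi := rfl
    rw [hMR, ← hco, map_sum]
    exact Finset.sum_congr rfl fun j _ => by rw [LinearMap.map_smul]
  have hwe : 0 ≤ psi (Rtil t) ⬝ᵥ psi (M * Rtil t) := by
    rw [hpsiM, dotProduct_finsum]
    apply Finset.sum_nonneg
    intro j _
    rw [dotProduct_smul, smul_eq_mul]
    apply mul_nonneg (hk j).le
    have h2 := so3_key2 (Rtil t) hRo hRo2 (b j)
    nlinarith [cs3 (b j) (psi (Rtil t))]
  -- bound on the forcing term
  have hwu : psi (Rtil t) ⬝ᵥ (∑ j, k j • g j t)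
      ≤ 2 * Real.sqrt 2 * (∑ j, k j * nI (Rj j t)) := by
    rw [dotProduct_finsum]
    have hle : ∀ j ∈ Finset.univ, psi (Rtil t) ⬝ᵥ (k j • g j t)
        ≤ k j * (2 * Real.sqrt 2 * nI (Rj j t)) := by
      intro j _
      rw [dotProduct_smul, smul_eq_mul, hg j t]
      have hAj := (hRjSO3 j t ht).1
      have hper := per_g_bound (Rtil t) (Rj j t) hRo hRo2 hRdet hAj (b j) (hb j)
      have hnI : nI (Rj j t) = Real.sqrt ((1 - Rj j t).trace / 4) := rfl
      rw [hnI]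
      exact mul_le_mul_of_nonneg_left hper (hk j).le
    calc (∑ j, psi (Rtil t) ⬝ᵥ (k j • g j t))
        ≤ ∑ j, k j * (2 * Real.sqrt 2 * nI (Rj j t)) := Finset.sum_le_sum hle
      _ = 2 * Real.sqrt 2 * ∑ j, k j * nI (Rj j t) := by
          rw [Finset.mul_sum]; exact Finset.sum_congr rfl fun j _ => by ring
  -- remaining scalar bounds
  have hV : (1 - Rtil t).trace / 4 ≤ 1 := by
    have := so3_tr_ge (Rtil t) hRo hRo2 hRdet
    rw [trace_one_sub]; linarith
  have hf3 : 0 ≤ 4*kR*lamQ*(1 - (1 - Rtil t).trace / 4) :=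
    mul_nonneg (by positivity) (by linarith)
  have hE : -(X' 0 0 + X' 1 1 + X' 2 2)/4
      = -(kR*(psi (Rtil t) ⬝ᵥ psi (M * Rtil t)))
        + kR*(psi (Rtil t) ⬝ᵥ (∑ j, k j • g j t))/2 := by
    rw [htrX, htr]; ring
  have hf1 : 0 ≤ kR * (psi (Rtil t) ⬝ᵥ psi (M * Rtil t)) := mul_nonneg hkR.le hwe
  have hf2 : kR * (psi (Rtil t) ⬝ᵥ (∑ j, k j • g j t))
      ≤ kR * (2 * Real.sqrt 2 * (∑ j, k j * nI (Rj j t))) :=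
    mul_le_mul_of_nonneg_left hwu hkR.le
  rw [hE]
  nlinarith [hf1, hf2, hf3]
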